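/- arXiv:1204.2257 — 3 statements merged into one kernel-verified Lean document; each statement's English description precedes it below -/
import Mathlib

section
/- Let w be a word of length n over an alphabet, and let m be the number of distinct cyclic rotations of w. Then m divides n, and w equals the (n/m)-fold concatenation of its prefix of length m. -/
open Fin.CommRing in
instance finIsAddCyclic (n : ℕ) [NeZero n] : IsAddCyclic (Fin n) :=
  ⟨1, fun x => ⟨(x.val : ℤ), by
    simp [zsmul_eq_mul, Fin.cast_val_eq_self]⟩⟩

open Fin.CommRing in
/-- In `Fin n` (as additive group), any subgroup `H` contains `n / #H` (cast to `Fin n`). -/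
lemma fin_div_card_mem (n : ℕ) [NeZero n] (H : AddSubgroup (Fin n)) :
    ((n / Nat.card H : ℕ) : Fin n) ∈ H := by
  obtain ⟨⟨x, hxH⟩, hgen⟩ := IsAddCyclic.exists_generator (α := H)
  have hHx : H = AddSubgroup.zmultiples x := by
    ext y
    constructor
    · intro hy
      obtain ⟨c, hc⟩ := hgen ⟨y, hy⟩
      exact ⟨c, congrArg Subtype.val hc⟩
    · intro hy
      obtain ⟨c, hc⟩ := hy
      exact hc ▸ AddSubgroup.zsmul_mem H hxH c
  have hone : ∀ y : Fin n, y ∈ AddSubgroup.zmultiples (1 : Fin n) := fun y =>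
    ⟨(y.val : ℤ), by simp [zsmul_eq_mul, Fin.cast_val_eq_self]⟩
  have horder1 : addOrderOf (1 : Fin n) = n := by
    rw [addOrderOf_eq_card_of_forall_mem_zmultiples hone, Nat.card_eq_fintype_card,
      Fintype.card_fin]
  have hx1 : x = x.val • (1 : Fin n) := by simp [nsmul_eq_mul]
  have horder : addOrderOf x = n / Nat.gcd n x.val := by
    conv_lhs => rw [hx1]
    rw [addOrderOf_nsmul, horder1]
  have hcard : Nat.card H = n / Nat.gcd n x.val := by
    rw [hHx, Nat.card_zmultiples, horder]
  set g := Nat.gcd n x.val with hg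
  have hgdvd : g ∣ n := Nat.gcd_dvd_left n x.val
  have hgpos : 0 < g := Nat.gcd_pos_of_pos_left _ (Nat.pos_of_ne_zero (NeZero.ne n))
  have hdd : n / Nat.card H = g := by
    rw [hcard, Nat.div_div_self hgdvd (NeZero.ne n)]
  rw [hdd]
  -- Bezout: g = n * A + x.val * B, so (g : Fin n) = B • x ∈ H
  have hbez := Nat.gcd_eq_gcd_ab n x.val
  have : ((g : ℕ) : Fin n) = (Nat.gcdB n x.val) • x := by
    have := congrArg (fun z : ℤ => (z : Fin n)) hbez
    simp only [Int.cast_add, Int.cast_mul, Int.cast_natCast, Fin.natCast_self, zero_mul,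
      zero_add, Fin.cast_val_eq_self] at this
    rw [zsmul_eq_mul, this, mul_comm]
  rw [this]
  exact AddSubgroup.zsmul_mem H hxH _

/-- If `m` is the number of distinct cyclic rotations of a word `w` of length `n`,
then `m ∣ n` and `w` is the `(n/m)`-fold concatenation of its prefix of length `m`,
i.e. `w` is `m`-periodic: letters whose indices agree modulo `m` are equal. -/
theorem word_period_of_orbit_card (n : ℕ) [NeZero n] {α : Type*} (w : Fin n → α)
    (m : ℕ)
    (hm : m = Nat.card {w' : Fin n → α | ∃ j : Fin n, ∀ i : Fin n, w' i = w (i + j)}) :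
    m ∣ n ∧ ∀ i j : Fin n, (i : ℕ) % m = (j : ℕ) % m → w i = w j := by
  classical
  letI : AddAction (Fin n) (Fin n → α) :=
    { vadd := fun j w' => fun i => w' (i + j)
      zero_vadd := fun w' => by funext i; show w' (i + 0) = w' i; rw [add_zero]
      add_vadd := fun a b w' => by
        funext i
        show w' (i + (a + b)) = w' ((i + a) + b)
        rw [add_assoc] }
  have horbit : {w' : Fin n → α | ∃ j : Fin n, ∀ i : Fin n, w' i = w (i + j)} =
      AddAction.orbit (Fin n) w := by
    ext w'
    constructor
    · rintro ⟨j, hj⟩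
      exact ⟨j, (funext fun i => (hj i).symm : (fun i => w (i + j)) = w')⟩
    · rintro ⟨j, hj⟩
      exact ⟨j, fun i => congrFun hj.symm i⟩
  haveI : Finite ↥(AddAction.orbit (Fin n) w) :=
    (Set.finite_range fun g : Fin n => g +ᵥ w).to_subtype
  letI : Fintype ↥(AddAction.orbit (Fin n) w) := Fintype.ofFinite _
  letI : Fintype ↥(AddAction.stabilizer (Fin n) w) := Fintype.ofFinite _
  have hos := AddAction.card_orbit_mul_card_stabilizer_eq_card_addGroup (Fin n) w
  rw [Fintype.card_fin] at hos
  have hmcard : m = Fintype.card ↥(AddAction.orbit (Fin n) w) := by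
    rw [hm, horbit, Nat.card_eq_fintype_card]
  set k := Fintype.card ↥(AddAction.stabilizer (Fin n) w) with hk
  rw [← hmcard] at hos
  -- hos : m * k = n
  have hkpos : 0 < k := Fintype.card_pos
  have hdvd : m ∣ n := ⟨k, hos.symm⟩
  have hmpos : 0 < m := Nat.pos_of_ne_zero fun h0 =>
    NeZero.ne n (by rw [h0, zero_mul] at hos; exact hos.symm)
  refine ⟨hdvd, ?_⟩
  have hmlen : m ≤ n := Nat.le_of_dvd (Nat.pos_of_ne_zero (NeZero.ne n)) hdvd
  -- n / card(stabilizer) = m, so (m : Fin n) stabilizes w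
  have hmem := fin_div_card_mem n (AddAction.stabilizer (Fin n) w)
  have hcardstab : Nat.card ↥(AddAction.stabilizer (Fin n) w) = k :=
    Nat.card_eq_fintype_card
  have hnk : n / k = m := Nat.div_eq_of_eq_mul_left hkpos hos.symm
  rw [hcardstab, hnk] at hmem
  open Fin.CommRing in
  have key : ∀ i : Fin n, w (i + (m : Fin n)) = w i := by
    intro i
    have := AddAction.mem_stabilizer_iff.mp hmem
    exact congrFun this i
  -- periodicity by induction
  have main : ∀ (q r : ℕ) (hr : r < m) (h : r + q * m < n),
      w ⟨r + q * m, h⟩ = w ⟨r, lt_of_lt_of_le hr hmlen⟩ := by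
    intro q
    induction q with
    | zero => intro r hr h; congr 1; apply Fin.ext; simp
    | succ q ih =>
      intro r hr h
      have hsum : r + q * m + m = r + (q + 1) * m := by
        rw [Nat.succ_mul, Nat.add_assoc]
      have ha : r + q * m < n :=
        Nat.lt_of_le_of_lt
          (Nat.add_le_add_left (Nat.mul_le_mul_right m (Nat.le_succ q)) r) h
      have hmn : m < n :=
        Nat.lt_of_le_of_lt
          (le_trans (Nat.le_mul_of_pos_left m (Nat.succ_pos q)) (Nat.le_add_left _ r)) h
      open Fin.CommRing in
      have e : (⟨r + q * m, ha⟩ : Fin n) + (m : Fin n) = ⟨r + (q + 1) * m, h⟩ := by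
        apply Fin.ext
        rw [Fin.add_def]
        simp only [Fin.val_natCast]
        rw [Nat.mod_eq_of_lt hmn, Nat.mod_eq_of_lt (hsum ▸ h), hsum]
      open Fin.CommRing in
      calc w ⟨r + (q + 1) * m, h⟩ = w ((⟨r + q * m, ha⟩ : Fin n) + (m : Fin n)) := by rw [e]
        _ = w ⟨r + q * m, ha⟩ := key _
        _ = w ⟨r, lt_of_lt_of_le hr hmlen⟩ := ih r hr ha
  have repr : ∀ i : Fin n, w i = w ⟨i.val % m, lt_of_lt_of_le (Nat.mod_lt _ hmpos) hmlen⟩ := by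
    intro i
    have h1 : i.val % m + (i.val / m) * m < n := by
      rw [Nat.mod_add_div']; exact i.isLt
    have h2 := main (i.val / m) (i.val % m) (Nat.mod_lt _ hmpos) h1
    have h3 : (⟨i.val % m + (i.val / m) * m, h1⟩ : Fin n) = i := by
      apply Fin.ext; simp [Nat.mod_add_div']
    rw [h3] at h2
    exact h2
  intro i j hij
  rw [repr i, repr j]
  congr 1
  exact Fin.ext hij
end

section
/- For the arcsine distribution on [-2,2] with density f(x) = 1/(\pi * sqrt(4 - x^2)), the (2n)-th moment \int_{-2}^{2} x^{2n} f(x) dx equals the central binomial coefficient C(2n, n), and all odd moments vanish. -/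
set_option linter.unnecessarySimpa false

open Real intervalIntegral Finset

lemma sin_pow_even_symm (n : ℕ) :
    (∫ x in (-(π/2))..(π/2), Real.sin x ^ (2 * n)) =
      π * ∏ i ∈ range n, (2 * (i : ℝ) + 1) / (2 * i + 2) := by
  induction' n with k ih
  · simp
  · rw [prod_range_succ_comm, mul_left_comm, ← ih, Nat.mul_succ, integral_sin_pow]
    simp [Real.cos_pi_div_two, Real.sin_pi_div_two]

lemma prod_eq_centralBinom (n : ℕ) :
    (4 : ℝ) ^ n * ∏ i ∈ range n, (2 * (i : ℝ) + 1) / (2 * i + 2) =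
      (Nat.choose (2 * n) n : ℝ) := by
  induction' n with k ih
  · simp
  · have key : ((k + 1 : ℕ) : ℝ) * (Nat.choose (2 * (k+1)) (k+1) : ℝ)
        = 2 * (2 * k + 1) * (Nat.choose (2 * k) k : ℝ) := by
      have h := congrArg (fun m : ℕ => (m : ℝ)) (Nat.succ_mul_centralBinom_succ k)
      simp only [Nat.centralBinom] at h
      push_cast at h ⊢
      linarith
    rw [prod_range_succ, pow_succ]
    have hrw : (4:ℝ)^k * 4 * ((∏ i ∈ range k, (2 * (i:ℝ) + 1) / (2 * i + 2)) * ((2*k+1)/(2*k+2)))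
        = ((4:ℝ)^k * ∏ i ∈ range k, (2 * (i:ℝ) + 1) / (2 * i + 2)) * (4 * ((2*k+1)/(2*k+2))) := by
      ring
    rw [hrw, ih]
    have h2k2 : (2 * (k : ℝ) + 2) ≠ 0 := by positivity
    field_simp
    push_cast at key ⊢
    nlinarith [key]

lemma arcsine_even' (n : ℕ) :
    (∫ x in (-2 : ℝ)..2, x ^ (2 * n) * (1 / (π * Real.sqrt (4 - x ^ 2)))) =
      ∫ t in (-(π/2))..(π/2), (2 * Real.sin t) ^ (2 * n) / π := by
  set g : ℝ → ℝ := fun t => (2 * Real.sin t) ^ (2 * n) / π with hg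
  have hgc : Continuous g := by fun_prop
  set H : ℝ → ℝ := fun θ => ∫ t in (0:ℝ)..θ, g t with hH
  have hHd : ∀ θ : ℝ, HasDerivAt H (g θ) θ := fun θ =>
    integral_hasDerivAt_right (hgc.intervalIntegrable _ _)
      (hgc.stronglyMeasurable.stronglyMeasurableAtFilter) hgc.continuousAt
  have hHc : Continuous H := continuous_iff_continuousAt.mpr fun θ => (hHd θ).continuousAt
  set F : ℝ → ℝ := fun x => H (Real.arcsin (x / 2)) with hF
  have hFc : Continuous F :=
    hHc.comp (Real.continuous_arcsin.comp (continuous_id.div_const 2))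
  set f : ℝ → ℝ := fun x => x ^ (2 * n) * (1 / (π * Real.sqrt (4 - x ^ 2))) with hf
  have hFd : ∀ x ∈ Set.Ioo (-2:ℝ) 2, HasDerivAt F (f x) x := by
    intro x hx
    have hx1 : x / 2 ≠ -1 := by rintro h; have := hx.1; rw [div_eq_iff (by norm_num : (2:ℝ) ≠ 0)] at h; linarith [hx.1, h ▸ le_refl x]
    have hx2 : x / 2 ≠ 1 := by intro h; rw [div_eq_iff (by norm_num : (2:ℝ) ≠ 0)] at h; linarith [hx.2]
    have ha : HasDerivAt (fun y : ℝ => Real.arcsin (y / 2))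
        (1 / Real.sqrt (1 - (x/2) ^ 2) * (1/2)) x := by
      have := (Real.hasDerivAt_arcsin hx1 hx2).comp x ((hasDerivAt_id x).div_const 2)
      simpa [Function.comp_def] using this
    have hcomp := (hHd (Real.arcsin (x/2))).comp x ha
    have hxd : |x / 2| ≤ 1 := by
      rw [abs_le]; constructor <;> [linarith [hx.1]; linarith [hx.2]]
    have hsin : Real.sin (Real.arcsin (x/2)) = x / 2 :=
      Real.sin_arcsin (by linarith [hx.1]) (by linarith [hx.2])
    have h4x : (0:ℝ) < 4 - x ^ 2 := by nlinarith [hx.1, hx.2]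
    have hsq : Real.sqrt (1 - (x/2)^2) = Real.sqrt (4 - x^2) / 2 := by
      have h1 : (0:ℝ) ≤ 1 - (x/2)^2 := by nlinarith [hx.1, hx.2]
      have h4 : Real.sqrt 4 = 2 := by
        rw [show (4:ℝ) = 2^2 by norm_num]; exact Real.sqrt_sq (by norm_num)
      have h5 : Real.sqrt (4 - x^2) = 2 * Real.sqrt (1 - (x/2)^2) := by
        rw [show (4 - x^2 : ℝ) = 4 * (1 - (x/2)^2) by ring,
          Real.sqrt_mul (by norm_num) , h4]
      rw [h5]; ring
    have : g (Real.arcsin (x/2)) * (1 / Real.sqrt (1 - (x/2) ^ 2) * (1/2)) = f x := by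
      simp only [hg, hf, hsin, hsq]
      have hsqrt_pos : (0:ℝ) < Real.sqrt (4 - x^2) := Real.sqrt_pos.mpr h4x
      have : 2 * (x / 2) = x := by ring
      rw [this]
      field_simp
    rw [← this]
    exact hcomp
  have hint : IntervalIntegrable f MeasureTheory.volume (-2) 2 := by
    apply intervalIntegrable_deriv_of_nonneg (g := F)
    · exact hFc.continuousOn
    · intro x hx
      rw [show min (-2:ℝ) 2 = -2 by norm_num, show max (-2:ℝ) 2 = 2 by norm_num] at hx
      exact hFd x hx
    · intro x hx
      simp only [hf]
      apply mul_nonneg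
      · exact (even_two_mul n).pow_nonneg x
      · positivity
  have := integral_eq_sub_of_hasDeriv_right_of_le (by norm_num : (-2:ℝ) ≤ 2)
    hFc.continuousOn (fun x hx => (hFd x hx).hasDerivWithinAt) hint
  rw [this]
  have hF2 : F 2 = H (π/2) := by simp [hF, Real.arcsin_one]
  have hFm2 : F (-2) = H (-(π/2)) := by
    simp only [hF]
    norm_num [Real.arcsin_neg, Real.arcsin_one]
  rw [hF2, hFm2, hH]
  rw [← intervalIntegral.integral_interval_sub_left (hgc.intervalIntegrable _ _) (hgc.intervalIntegrable _ _)]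

/-- For the arcsine distribution on `[-2,2]` with density `1/(π √(4-x²))`, the
`2n`-th moment equals the central binomial coefficient `C(2n, n)` and all odd
moments vanish. -/
theorem arcsine_moments (n : ℕ) :
    (∫ x in (-2 : ℝ)..2, x ^ (2 * n) * (1 / (π * Real.sqrt (4 - x ^ 2)))) =
        (Nat.choose (2 * n) n : ℝ) ∧
      (∫ x in (-2 : ℝ)..2, x ^ (2 * n + 1) * (1 / (π * Real.sqrt (4 - x ^ 2)))) = 0 := by
  constructor
  · rw [arcsine_even' n]
    have hpt : ∀ t : ℝ, (2 * Real.sin t) ^ (2 * n) / π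
        = (4:ℝ)^n / π * Real.sin t ^ (2 * n) := by
      intro t
      rw [mul_pow, show (2:ℝ)^(2*n) = 4^n by rw [pow_mul]; norm_num]
      ring
    simp only [hpt]
    rw [intervalIntegral.integral_const_mul, sin_pow_even_symm]
    have hπ : (π : ℝ) ≠ 0 := Real.pi_ne_zero
    rw [← prod_eq_centralBinom n]
    field_simp
  · set f : ℝ → ℝ := fun x => x ^ (2 * n + 1) * (1 / (π * Real.sqrt (4 - x ^ 2))) with hf
    have h1 : (∫ x in (-2 : ℝ)..2, f (-x)) = ∫ x in (-2:ℝ)..2, f x := by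
      simpa using intervalIntegral.integral_comp_neg (a := (-2:ℝ)) (b := 2) f
    have hodd : Odd (2 * n + 1) := ⟨n, by ring⟩
    have h2 : (fun x : ℝ => f (-x)) = fun x => -f x := by
      funext x
      simp only [hf, neg_sq]
      rw [hodd.neg_pow]
      ring
    rw [h2, intervalIntegral.integral_neg] at h1
    linarith
end

section
/- Let g_1, ..., g_N be i.i.d. real random variables with mean 0 and variance 1, A = diag(g_1,...,g_N), and B the circulant cycle adjacency matrix as above with N \ge 5. Then E[(1/N) trace((AB)^4)] = 2. -/
open Matrix MeasureTheory ProbabilityTheory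
open scoped ENNReal

section Main


lemma trace_pow_four (N : ℕ) [NeZero N] (hN : 5 ≤ N)
    (a : ZMod N → ℝ) (B : Matrix (ZMod N) (ZMod N) ℝ)
    (hB : ∀ i j : ZMod N, B i j = if j = i + 1 ∨ j = i - 1 then 1 else 0) :
    ((Matrix.diagonal a * B) ^ 4).trace
      = ∑ i : ZMod N, (a i * a (i-1)^2 * a (i-2) + a i^2 * a (i-1)^2
          + 2*(a i^2 * a (i-1) * a (i+1)) + a i^2 * a (i+1)^2
          + a i * a (i+1)^2 * a (i+2)) := by
  have hc : ∀ c : ℕ, 0 < c → c < 5 → (c : ZMod N) ≠ 0 := by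
    intro c h1 h2 h
    rw [ZMod.natCast_eq_zero_iff] at h
    have := Nat.le_of_dvd h1 h
    omega
  have h2 : (2 : ZMod N) ≠ 0 := by simpa using hc 2 (by norm_num) (by norm_num)
  have h4 : (4 : ZMod N) ≠ 0 := by simpa using hc 4 (by norm_num) (by norm_num)
  set M := Matrix.diagonal a * B with hMdef
  have hM : ∀ x y : ZMod N, M x y = a x * (if y = x + 1 ∨ y = x - 1 then 1 else 0) := by
    intro x y
    rw [hMdef]
    simp only [Matrix.mul_apply, Matrix.diagonal_apply, hB, ite_mul, zero_mul]
    rw [Finset.sum_congr rfl (fun x1 _ => show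
        (if x = x1 then a x * if y = x1 + 1 ∨ y = x1 - 1 then 1 else 0 else 0)
        = if x = x1 then a x * (if y = x + 1 ∨ y = x - 1 then 1 else 0) else 0 by
      by_cases h : x = x1 <;> simp [h])]
    simp [Finset.sum_ite_eq]
  have key : ∀ (f : ZMod N → ℝ) (x : ZMod N),
      ∑ j, f j * M j x = f (x-1) * a (x-1) + f (x+1) * a (x+1) := by
    intro f x
    have step : ∀ j : ZMod N, f j * M j x
        = (if j = x - 1 then f (x-1) * a (x-1) else 0)
          + (if j = x + 1 then f (x+1) * a (x+1) else 0) := by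
      intro j
      rw [hM]
      by_cases e1 : j = x - 1
      · subst e1
        have c1 : (x - 1) + 1 = x := by ring
        have c2 : ¬ (x - 1 = x + 1) := by
          intro h; apply h2; linear_combination -h
        simp [c1, c2]
      · by_cases e2 : j = x + 1
        · subst e2
          have c1 : (x + 1) - 1 = x := by ring
          have c2 : ¬ (x + 1 = x - 1) := by
            intro h; apply h2; linear_combination h
          simp [c1, e1, c2]
        · have c1 : ¬ (x = j + 1) := by
            intro h; apply e1; linear_combination -h
          have c2 : ¬ (x = j - 1) := by
            intro h; apply e2; linear_combination -h
          simp [c1, c2, e1, e2]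
    rw [Finset.sum_congr rfl (fun j _ => step j), Finset.sum_add_distrib]
    simp [Finset.sum_ite_eq']
  have hMv : ∀ x y : ZMod N, M x y = a x * (if y = x + 1 then 1 else 0)
      + a x * (if y = x - 1 then 1 else 0) := by
    intro x y
    rw [hM]
    by_cases e1 : y = x + 1
    · have c2 : ¬ (x + 1 = x - 1) := by
        intro h; apply h2; linear_combination h
      simp [e1, c2]
    · by_cases e2 : y = x - 1
      · have c2 : ¬ (x - 1 = x + 1) := by
          intro h; apply h2; linear_combination -h
        simp [e1, e2, c2]
      · simp [e1, e2]
  rw [show M ^ 4 = ((M ^ 1 * M) * M) * M by rw [← pow_succ, ← pow_succ, ← pow_succ], pow_one]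
  rw [Matrix.trace]
  apply Finset.sum_congr rfl
  intro i _
  rw [Matrix.diag]
  rw [Matrix.mul_apply, key, Matrix.mul_apply, Matrix.mul_apply, key, key,
    Matrix.mul_apply, Matrix.mul_apply, Matrix.mul_apply, Matrix.mul_apply,
    key, key, key, key]
  have z1 : M i (i - 1 - 1 - 1) = 0 := by
    rw [hMv]
    have c1 : ¬ (i - 1 - 1 - 1 = i + 1) := by intro h; apply h4; linear_combination -h
    have c2 : ¬ (i - 1 - 1 - 1 = i - 1) := by intro h; apply h2; linear_combination -h
    simp [c1, c2]
  have z2 : M i (i + 1 + 1 + 1) = 0 := by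
    rw [hMv]
    have c1 : ¬ (i + 1 + 1 + 1 = i + 1) := by intro h; apply h2; linear_combination h
    have c2 : ¬ (i + 1 + 1 + 1 = i - 1) := by intro h; apply h4; linear_combination h
    simp [c1, c2]
  have vm : M i (i - 1) = a i := by
    rw [hMv]
    have c1 : ¬ (i - 1 = i + 1) := by intro h; apply h2; linear_combination -h
    simp [c1]
  have vp : M i (i + 1) = a i := by
    rw [hMv]
    have c2 : ¬ (i + 1 = i - 1) := by intro h; apply h2; linear_combination h
    simp [c2]
  rw [show i - 1 - 1 + 1 = i - 1 by ring, show i - 1 + 1 - 1 = i - 1 by ring,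
    show i - 1 + 1 + 1 = i + 1 by ring, show i + 1 - 1 - 1 = i - 1 by ring,
    show i + 1 - 1 + 1 = i + 1 by ring, show i + 1 + 1 - 1 = i + 1 by ring]
  rw [z1, z2, vm, vp]
  rw [show i - 1 - 1 = i - 2 by ring, show i + 1 + 1 = i + 2 by ring,
    show i - 1 + 1 = i by ring, show i + 1 - 1 = i by ring]
  ring


/-- For `A = diag(g₁,…,g_N)` with i.i.d. entries of mean 0, variance 1 and finite
fourth moment, and `B` the adjacency matrix of the `N`-cycle (`N ≥ 5`), the
normalized expected trace satisfies `E[(1/N) trace((AB)⁴)] = 2`. -/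
theorem expected_trace_AB_four (N : ℕ) [NeZero N] (hN : 5 ≤ N)
    {Ω : Type*} [MeasurableSpace Ω] (μ : Measure Ω) [IsProbabilityMeasure μ]
    (g : ZMod N → Ω → ℝ)
    (hmeas : ∀ i, Measurable (g i))
    (hindep : iIndepFun g μ)
    (hident : ∀ i j, IdentDistrib (g i) (g j) μ μ)
    (hmom : ∀ i, MemLp (g i) 4 μ)
    (hmean : ∀ i, ∫ ω, g i ω ∂μ = 0)
    (hvar : ∀ i, ∫ ω, (g i ω) ^ 2 ∂μ = 1)
    (B : Matrix (ZMod N) (ZMod N) ℝ)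
    (hB : ∀ i j : ZMod N, B i j = if j = i + 1 ∨ j = i - 1 then 1 else 0) :
    ∫ ω, (1 / (N : ℝ)) * ((Matrix.diagonal (fun i => g i ω) * B) ^ 4).trace ∂μ = 2 := by
  have hc : ∀ c : ℕ, 0 < c → c < 5 → (c : ZMod N) ≠ 0 := by
    intro c h1 h2 h
    rw [ZMod.natCast_eq_zero_iff] at h
    have := Nat.le_of_dvd h1 h
    omega
  have h1z : (1 : ZMod N) ≠ 0 := by simpa using hc 1 (by norm_num) (by norm_num)
  have h2z : (2 : ZMod N) ≠ 0 := by simpa using hc 2 (by norm_num) (by norm_num)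
  -- basic integrability facts
  have hL2 : ∀ i, MemLp (g i) 2 μ := fun i => (hmom i).mono_exponent (by norm_num)
  have hmul2 : ∀ i j, MemLp (fun ω => g i ω * g j ω) 2 μ := by
    intro i j
    exact (hmom j).smul (hmom i) (hpqr := ⟨by
      rw [← two_mul, show (4:ℝ≥0∞) = 2*2 by norm_num, ENNReal.mul_inv (by norm_num) (by norm_num),
        ← mul_assoc, ENNReal.mul_inv_cancel (by norm_num) (by norm_num), one_mul]⟩)
  have hsq : ∀ i, MemLp (fun ω => g i ω ^ 2) 2 μ := by
    intro i
    have h := hmul2 i i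
    rw [show (fun ω => g i ω ^ 2) = fun ω => g i ω * g i ω from funext fun ω => by ring]
    exact h
  have hmulI : ∀ (f1 f2 : Ω → ℝ), MemLp f1 2 μ → MemLp f2 2 μ →
      Integrable (fun ω => f1 ω * f2 ω) μ := by
    intro f1 f2 h1 h2
    rw [← memLp_one_iff_integrable]
    exact h2.smul h1 (hpqr := ⟨by
      rw [inv_one, ENNReal.inv_two_add_inv_two]⟩)
  -- integrability of the five kinds of terms
  have hIntT1 : ∀ i j k : ZMod N, Integrable (fun ω => g i ω * g j ω ^ 2 * g k ω) μ := by
    intro i j k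
    rw [show (fun ω => g i ω * g j ω ^ 2 * g k ω)
        = fun ω => (g i ω * g k ω) * g j ω ^ 2 from funext fun ω => by ring]
    exact hmulI _ _ (hmul2 i k) (hsq j)
  have hIntT2 : ∀ i j : ZMod N, Integrable (fun ω => g i ω ^ 2 * g j ω ^ 2) μ :=
    fun i j => hmulI _ _ (hsq i) (hsq j)
  have hIntT3 : ∀ i j k : ZMod N, Integrable (fun ω => g i ω ^ 2 * g j ω * g k ω) μ := by
    intro i j k
    rw [show (fun ω => g i ω ^ 2 * g j ω * g k ω)
        = fun ω => (g j ω * g k ω) * g i ω ^ 2 from funext fun ω => by ring]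
    exact hmulI _ _ (hmul2 j k) (hsq i)
  -- expectations
  have hE2 : ∀ i j : ZMod N, i ≠ j → ∫ ω, g i ω ^ 2 * g j ω ^ 2 ∂μ = 1 := by
    intro i j hij
    have hφ : Measurable fun x : ℝ => x ^ 2 := (continuous_pow 2).measurable
    have hIndep : IndepFun (fun ω => g i ω ^ 2) (fun ω => g j ω ^ 2) μ :=
      (hindep.indepFun hij).comp hφ hφ
    have h := hIndep.integral_fun_mul_eq_mul_integral ((hsq i).integrable (by norm_num)).aestronglyMeasurable
      ((hsq j).integrable (by norm_num)).aestronglyMeasurable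
    have h' : ∫ ω, g i ω ^ 2 * g j ω ^ 2 ∂μ
        = (∫ ω, g i ω ^ 2 ∂μ) * ∫ ω, g j ω ^ 2 ∂μ := h
    rw [h', hvar i, hvar j]; norm_num
  have hEA : ∀ i j k : ZMod N, i ≠ k → j ≠ k →
      ∫ ω, g i ω * g j ω ^ 2 * g k ω ∂μ = 0 := by
    intro i j k hik hjk
    have hpair := hindep.indepFun_prodMk hmeas i j k hik hjk
    have hφ : Measurable (fun p : ℝ × ℝ => p.1 * p.2 ^ 2) :=
      measurable_fst.mul (measurable_snd.pow_const 2)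
    have hIndep : IndepFun (fun ω => g i ω * g j ω ^ 2) (g k) μ :=
      hpair.comp hφ measurable_id
    have h := hIndep.integral_fun_mul_eq_mul_integral
      (by
        rw [show (fun ω => g i ω * g j ω ^ 2) = fun ω => g i ω * g j ω ^ 2 from rfl]
        exact (hmulI _ _ (hL2 i) (hsq j)).aestronglyMeasurable)
      ((hL2 k).integrable (by norm_num)).aestronglyMeasurable
    have h' : ∫ ω, g i ω * g j ω ^ 2 * g k ω ∂μ
        = (∫ ω, g i ω * g j ω ^ 2 ∂μ) * ∫ ω, g k ω ∂μ := h
    rw [h', hmean k, mul_zero]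
  have hEB : ∀ i j k : ZMod N, i ≠ k → j ≠ k →
      ∫ ω, g i ω ^ 2 * g j ω * g k ω ∂μ = 0 := by
    intro i j k hik hjk
    have hpair := hindep.indepFun_prodMk hmeas i j k hik hjk
    have hφ : Measurable (fun p : ℝ × ℝ => p.1 ^ 2 * p.2) :=
      (measurable_fst.pow_const 2).mul measurable_snd
    have hIndep : IndepFun (fun ω => g i ω ^ 2 * g j ω) (g k) μ :=
      hpair.comp hφ measurable_id
    have h := hIndep.integral_fun_mul_eq_mul_integral
      (hmulI _ _ (hsq i) (hL2 j)).aestronglyMeasurable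
      ((hL2 k).integrable (by norm_num)).aestronglyMeasurable
    have h' : ∫ ω, g i ω ^ 2 * g j ω * g k ω ∂μ
        = (∫ ω, g i ω ^ 2 * g j ω ∂μ) * ∫ ω, g k ω ∂μ := h
    rw [h', hmean k, mul_zero]
  -- pointwise rewrite of the integrand
  have hfun : (fun ω => (1 / (N : ℝ)) * ((Matrix.diagonal (fun i => g i ω) * B) ^ 4).trace)
      = fun ω => (1 / (N : ℝ)) * ∑ i : ZMod N,
          (g i ω * g (i-1) ω ^ 2 * g (i-2) ω + g i ω ^ 2 * g (i-1) ω ^ 2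
            + 2 * (g i ω ^ 2 * g (i-1) ω * g (i+1) ω) + g i ω ^ 2 * g (i+1) ω ^ 2
            + g i ω * g (i+1) ω ^ 2 * g (i+2) ω) := by
    funext ω
    rw [trace_pow_four N hN (fun i => g i ω) B hB]
  rw [show (∫ ω, (1 / (N : ℝ)) * ((Matrix.diagonal (fun i => g i ω) * B) ^ 4).trace ∂μ)
      = ∫ ω, (fun ω => (1 / (N : ℝ)) * ((Matrix.diagonal (fun i => g i ω) * B) ^ 4).trace) ω ∂μ
      from rfl, hfun]
  rw [integral_const_mul]
  have hIntF : ∀ i : ZMod N, Integrable (fun ω =>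
      g i ω * g (i-1) ω ^ 2 * g (i-2) ω + g i ω ^ 2 * g (i-1) ω ^ 2
        + 2 * (g i ω ^ 2 * g (i-1) ω * g (i+1) ω) + g i ω ^ 2 * g (i+1) ω ^ 2
        + g i ω * g (i+1) ω ^ 2 * g (i+2) ω) μ := by
    intro i
    exact ((((hIntT1 i (i-1) (i-2)).add (hIntT2 i (i-1))).add
      ((hIntT3 i (i-1) (i+1)).const_mul 2)).add (hIntT2 i (i+1))).add (hIntT1 i (i+1) (i+2))
  rw [integral_finset_sum Finset.univ (fun i _ => hIntF i)]
  have hEi : ∀ i : ZMod N, (∫ ω, (g i ω * g (i-1) ω ^ 2 * g (i-2) ω + g i ω ^ 2 * g (i-1) ω ^ 2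
        + 2 * (g i ω ^ 2 * g (i-1) ω * g (i+1) ω) + g i ω ^ 2 * g (i+1) ω ^ 2
        + g i ω * g (i+1) ω ^ 2 * g (i+2) ω) ∂μ) = 2 := by
    intro i
    have n1 : i ≠ i - 2 := fun h => h2z (by linear_combination h)
    have n2 : i - 1 ≠ i - 2 := fun h => h1z (by linear_combination h)
    have n3 : i ≠ i + 1 := fun h => h1z (by linear_combination -h)
    have n4 : i - 1 ≠ i + 1 := fun h => h2z (by linear_combination -h)
    have n5 : i ≠ i - 1 := fun h => h1z (by linear_combination h)
    have n6 : i ≠ i + 2 := fun h => h2z (by linear_combination -h)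
    have n7 : i + 1 ≠ i + 2 := fun h => h1z (by linear_combination -h)
    have i1 := hIntT1 i (i-1) (i-2)
    have i2 := hIntT2 i (i-1)
    have i3 : Integrable (fun ω => 2 * (g i ω ^ 2 * g (i-1) ω * g (i+1) ω)) μ := by
      exact (hIntT3 i (i-1) (i+1)).const_mul 2
    have i4 := hIntT2 i (i+1)
    have i5 := hIntT1 i (i+1) (i+2)
    have i12 : Integrable (fun ω => g i ω * g (i-1) ω ^ 2 * g (i-2) ω
        + g i ω ^ 2 * g (i-1) ω ^ 2) μ := by exact i1.add i2
    have i123 : Integrable (fun ω => g i ω * g (i-1) ω ^ 2 * g (i-2) ω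
        + g i ω ^ 2 * g (i-1) ω ^ 2
        + 2 * (g i ω ^ 2 * g (i-1) ω * g (i+1) ω)) μ := by exact i12.add i3
    have i1234 : Integrable (fun ω => g i ω * g (i-1) ω ^ 2 * g (i-2) ω
        + g i ω ^ 2 * g (i-1) ω ^ 2
        + 2 * (g i ω ^ 2 * g (i-1) ω * g (i+1) ω)
        + g i ω ^ 2 * g (i+1) ω ^ 2) μ := by exact i123.add i4
    rw [integral_add i1234 i5, integral_add i123 i4, integral_add i12 i3,
      integral_add i1 i2, integral_const_mul]
    rw [hEA i (i-1) (i-2) n1 n2, hE2 i (i-1) n5, hEB i (i-1) (i+1) n3 n4,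
      hE2 i (i+1) n3, hEA i (i+1) (i+2) n6 n7]
    norm_num
  rw [Finset.sum_congr rfl (fun i _ => hEi i)]
  rw [Finset.sum_const, Finset.card_univ, ZMod.card]
  have hNne : (N : ℝ) ≠ 0 := Nat.cast_ne_zero.mpr (by omega)
  field_simp
  rw [nsmul_eq_mul]

end Main
end
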